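/- There exists a constant Ĉ₃ > 0, depending only on m, α and β, such that for any solution (u^k_n, v^k_n) of the QLB scheme, any solution (ũ^k_n, ṽ^k_n) of the inhomogeneous QLB scheme with sources g^{k,1}_n, g^{k,2}_n, any h ∈ (0,1/4), any k ≥ 0 and any n ∈ ℤ: | |U^{k+1}_{n+1}|² − |U^k_n|² |/h ≤ Ĉ₃(|U^{k+1}_{n+1}|² + |V^{k+1}_{n−1}|² + |U^k_n|² + |V^k_n|² + Ê^k_n + |g^k_n|²) and | |V^{k+1}_{n−1}|² − |V^k_n|² |/h ≤ Ĉ₃(|U^{k+1}_{n+1}|² + |V^{k+1}_{n−1}|² + |U^k_n|² + |V^k_n|² + Ê^k_n + |g^k_n|²), where Ê^k_n = (|U^{k+1}_{n+1}|² + |U^k_n|²)(|v^{k+1}_{n−1}|² + |v^k_n|² + |ṽ^{k+1}_{n−1}|² + |ṽ^k_n|²) + (|V^{k+1}_{n−1}|² + |V^k_n|²)(|u^{k+1}_{n+1}|² + |u^k_n|² + |ũ^{k+1}_{n+1}|² + |ũ^k_n|²). -/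

import Mathlib

open Complex

noncomputable section

/-- `G(u,v) = conj(u)·v + u·conj(v)`. -/
def Gc (u v : ℂ) : ℂ := (starRingEnd ℂ) u * v + u * (starRingEnd ℂ) v

/-- One step of the quantum lattice Boltzmann (QLB) scheme:
`a, b` are the values `u^k_n, v^k_n` and `a', b'` the values `u^{k+1}_{n+1}, v^{k+1}_{n-1}`. -/
def QLBStep (h m α β : ℝ) (a b a' b' : ℂ) : Prop :=
  a' - a = (Complex.I * (m : ℂ) * (h : ℂ) / 2) * (b' + b)
      + (Complex.I * (α : ℂ) * (h : ℂ) / 2) * (a' + a) * ((‖b‖ ^ 2 : ℝ) : ℂ)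
      + (Complex.I * (β : ℂ) * (h : ℂ) / 2) * (b' + b) * Gc a b
  ∧ b' - b = (Complex.I * (m : ℂ) * (h : ℂ) / 2) * (a' + a)
      + (Complex.I * (α : ℂ) * (h : ℂ) / 2) * (b' + b) * ((‖a‖ ^ 2 : ℝ) : ℂ)
      + (Complex.I * (β : ℂ) * (h : ℂ) / 2) * (a' + a) * Gc a b

/-- `(u, v)` is a solution of the QLB scheme. -/
def IsQLB (h m α β : ℝ) (u v : ℕ → ℤ → ℂ) : Prop :=
  ∀ (k : ℕ) (n : ℤ), QLBStep h m α β (u k n) (v k n) (u (k + 1) (n + 1)) (v (k + 1) (n - 1))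

/-- One step of the inhomogeneous QLB scheme with sources `g1, g2`. -/
def QLBStepInhom (h m α β : ℝ) (g1 g2 : ℂ) (a b a' b' : ℂ) : Prop :=
  (a' - a) / (h : ℂ) = (Complex.I * (m : ℂ) / 2) * (b' + b)
      + (Complex.I * (α : ℂ) / 2) * (a' + a) * ((‖b‖ ^ 2 : ℝ) : ℂ)
      + (Complex.I * (β : ℂ) / 2) * (b' + b) * Gc a b + g1
  ∧ (b' - b) / (h : ℂ) = (Complex.I * (m : ℂ) / 2) * (a' + a)
      + (Complex.I * (α : ℂ) / 2) * (b' + b) * ((‖a‖ ^ 2 : ℝ) : ℂ)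
      + (Complex.I * (β : ℂ) / 2) * (a' + a) * Gc a b + g2

/-- `(u, v)` is a solution of the inhomogeneous QLB scheme with sources `g1, g2`. -/
def IsQLBInhom (h m α β : ℝ) (g1 g2 : ℕ → ℤ → ℂ) (u v : ℕ → ℤ → ℂ) : Prop :=
  ∀ (k : ℕ) (n : ℤ), QLBStepInhom h m α β (g1 k n) (g2 k n)
    (u k n) (v k n) (u (k + 1) (n + 1)) (v (k + 1) (n - 1))

/-!
Subtracting the two schemes writes `U^{k+1}_{n+1} - U^k_n` as `h` times the difference of the
right-hand sides plus `h g^{k,1}_n`. Every term of that difference is a product of one of the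
differences `U`, `V` with values of the solutions, so after multiplying by
`|U^{k+1}_{n+1}| + |U^k_n|` (from `| |x|² - |y|² | ≤ |x - y| (|x| + |y|)`) Young's inequality
`2xy ≤ x² + y²` splits it into the terms of the right-hand side, with
`Ĉ₃ = 16 (|m| + |α| + |β|) + 1`. Exchanging the two components maps both schemes to
themselves because `G` is symmetric, which gives the estimate for `V`.
-/

theorem abs_sq_norm_sub_sq_norm_le {E : Type*} [SeminormedAddCommGroup E] (x y : E) :
    |‖x‖ ^ 2 - ‖y‖ ^ 2| ≤ ‖x - y‖ * (‖x‖ + ‖y‖) := by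
  rw [sq_sub_sq, abs_mul, abs_of_nonneg (by positivity : 0 ≤ ‖x‖ + ‖y‖), mul_comm]
  gcongr
  exact abs_norm_sub_norm_le x y

theorem norm_mul_sub_mul_le {R : Type*} [NonUnitalSeminormedRing R] (x y x' y' : R) :
    ‖x' * y' - x * y‖ ≤ ‖x' - x‖ * ‖y'‖ + ‖x‖ * ‖y' - y‖ := by
  calc ‖x' * y' - x * y‖ = ‖(x' - x) * y' + x * (y' - y)‖ := by noncomm_ring
    _ ≤ _ := (norm_add_le _ _).trans (add_le_add (norm_mul_le _ _) (norm_mul_le _ _))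

theorem sq_add_add_add_le (w x y z : ℝ) :
    (w + x + y + z) ^ 2 ≤ 4 * (w ^ 2 + x ^ 2 + y ^ 2 + z ^ 2) := by
  nlinarith [add_sq_le (a := w + x) (b := y + z), add_sq_le (a := w) (b := x),
    add_sq_le (a := y) (b := z)]

theorem Gc_comm (u v : ℂ) : Gc u v = Gc v u := by
  unfold Gc; ring

theorem norm_Gc_le (u v : ℂ) : ‖Gc u v‖ ≤ 2 * ‖u‖ * ‖v‖ := by
  unfold Gc
  refine (norm_add_le _ _).trans_eq ?_
  simp only [norm_mul, Complex.norm_conj]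
  ring

theorem Gc_sub_Gc (u v u' v' : ℂ) : Gc u' v' - Gc u v = Gc (u' - u) v' + Gc u (v' - v) := by
  simp only [Gc, map_sub]; ring

def qlbRhs (m α β : ℝ) (a b a' b' : ℂ) : ℂ :=
  (Complex.I * (m : ℂ) / 2) * (b' + b)
    + (Complex.I * (α : ℂ) / 2) * (a' + a) * ((‖b‖ ^ 2 : ℝ) : ℂ)
    + (Complex.I * (β : ℂ) / 2) * (b' + b) * Gc a b

theorem QLBStep.swap {h m α β : ℝ} {a b a' b' : ℂ} (hs : QLBStep h m α β a b a' b') :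
    QLBStep h m α β b a b' a' := by
  rw [QLBStep, Gc_comm b a]
  exact hs.symm

theorem QLBStepInhom.swap {h m α β : ℝ} {g1 g2 a b a' b' : ℂ}
    (hs : QLBStepInhom h m α β g1 g2 a b a' b') : QLBStepInhom h m α β g2 g1 b a b' a' := by
  rw [QLBStepInhom, Gc_comm b a]
  exact hs.symm

theorem QLBStep.sub_eq {h m α β : ℝ} {a b a' b' : ℂ} (hs : QLBStep h m α β a b a' b') :
    a' - a = h * qlbRhs m α β a b a' b' := by
  rw [hs.1, qlbRhs]; ring

theorem QLBStepInhom.sub_eq {h m α β : ℝ} (hh : h ≠ 0) {g1 g2 a b a' b' : ℂ}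
    (hs : QLBStepInhom h m α β g1 g2 a b a' b') :
    a' - a = h * (qlbRhs m α β a b a' b' + g1) := by
  rw [mul_comm, ← div_eq_iff (Complex.ofReal_ne_zero.mpr hh), hs.1, qlbRhs]

theorem norm_I_mul_ofReal_div_two (x : ℝ) : ‖Complex.I * (x : ℂ) / 2‖ = |x| / 2 := by
  simp

theorem qlbRhs_sub_qlbRhs (m α β : ℝ) (a b a' b' ta tb ta' tb' : ℂ) :
    qlbRhs m α β ta tb ta' tb' - qlbRhs m α β a b a' b'
      = Complex.I * (m : ℂ) / 2 * ((tb' + tb) - (b' + b))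
        + Complex.I * (α : ℂ) / 2
          * ((ta' + ta) * ((‖tb‖ ^ 2 : ℝ) : ℂ) - (a' + a) * ((‖b‖ ^ 2 : ℝ) : ℂ))
        + Complex.I * (β : ℂ) / 2 * ((tb' + tb) * Gc ta tb - (b' + b) * Gc a b) := by
  simp only [qlbRhs]; ring

theorem norm_qlbRhs_sub_qlbRhs_le (m α β : ℝ) (a b a' b' ta tb ta' tb' : ℂ) :
    ‖qlbRhs m α β ta tb ta' tb' - qlbRhs m α β a b a' b'‖ ≤
      (|m| + |α| + |β|) * (‖tb' - b'‖ + ‖tb - b‖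
        + (‖ta' - a'‖ + ‖ta - a‖) * (‖b'‖ + ‖b‖ + ‖tb'‖ + ‖tb‖) ^ 2
        + 2 * (‖a'‖ + ‖a‖ + ‖ta'‖ + ‖ta‖) * (‖tb' - b'‖ + ‖tb - b‖)
          * (‖b'‖ + ‖b‖ + ‖tb'‖ + ‖tb‖)) := by
  set p := ‖ta' - a'‖ + ‖ta - a‖
  set r := ‖tb' - b'‖ + ‖tb - b‖
  set A := ‖a'‖ + ‖a‖ + ‖ta'‖ + ‖ta‖
  set B := ‖b'‖ + ‖b‖ + ‖tb'‖ + ‖tb‖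
  have hU : ‖(ta' + ta) - (a' + a)‖ ≤ p :=
    (norm_add_le (ta' - a') (ta - a)).trans_eq' (by ring_nf)
  have hV : ‖(tb' + tb) - (b' + b)‖ ≤ r :=
    (norm_add_le (tb' - b') (tb - b)).trans_eq' (by ring_nf)
  have := norm_nonneg a; have := norm_nonneg a'; have := norm_nonneg ta; have := norm_nonneg ta'
  have := norm_nonneg b; have := norm_nonneg b'; have := norm_nonneg tb; have := norm_nonneg tb'
  have := norm_nonneg (ta' - a'); have := norm_nonneg (ta - a)
  have := norm_nonneg (tb' - b'); have := norm_nonneg (tb - b)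
  have ha : ‖a' + a‖ ≤ A := (norm_add_le _ _).trans (by linarith)
  have hb : ‖b' + b‖ ≤ B := (norm_add_le _ _).trans (by linarith)
  have hα : ‖(ta' + ta) * ((‖tb‖ ^ 2 : ℝ) : ℂ) - (a' + a) * ((‖b‖ ^ 2 : ℝ) : ℂ)‖
      ≤ p * B ^ 2 + A * (r * B) := by
    refine (norm_mul_sub_mul_le _ _ _ _).trans ?_
    rw [← Complex.ofReal_sub, Complex.norm_real, Complex.norm_real, Real.norm_eq_abs,
      Real.norm_eq_abs, abs_sq]
    gcongr
    · linarith
    · exact (abs_sq_norm_sub_sq_norm_le tb b).trans (by gcongr <;> linarith)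
  have hβ : ‖(tb' + tb) * Gc ta tb - (b' + b) * Gc a b‖
      ≤ r * (2 * A * B) + B * (2 * p * B + 2 * A * r) := by
    refine (norm_mul_sub_mul_le _ _ _ _).trans ?_
    rw [Gc_sub_Gc]
    gcongr
    · exact (norm_Gc_le _ _).trans (by gcongr <;> linarith)
    · refine (norm_add_le _ _).trans (add_le_add ((norm_Gc_le _ _).trans ?_)
        ((norm_Gc_le _ _).trans ?_)) <;> gcongr <;> linarith
  calc _ ≤ |m| / 2 * r + |α| / 2 * (p * B ^ 2 + A * (r * B))
        + |β| / 2 * (r * (2 * A * B) + B * (2 * p * B + 2 * A * r)) := by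
          rw [qlbRhs_sub_qlbRhs]
          refine norm_add₃_le.trans ?_
          simp only [norm_mul, norm_I_mul_ofReal_div_two]
          gcongr
    _ ≤ |m| / 2 * (2 * (r + p * B ^ 2 + 2 * A * r * B))
        + |α| / 2 * (2 * (r + p * B ^ 2 + 2 * A * r * B))
        + |β| / 2 * (2 * (r + p * B ^ 2 + 2 * A * r * B)) := by
          have : 0 ≤ p * B ^ 2 := by positivity
          have : 0 ≤ A * r * B := by positivity
          gcongr <;> linarith
    _ = _ := by ring

theorem young_absorb_le {K P Q R S A B YA YB g g' : ℝ} (hK : 0 ≤ K)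
    (hA : A ^ 2 ≤ 4 * YA) (hB : B ^ 2 ≤ 4 * YB) :
    (P + Q) * (K * (R + S + (P + Q) * B ^ 2 + 2 * A * (R + S) * B) + g)
      ≤ (16 * K + 1) * (P ^ 2 + R ^ 2 + Q ^ 2 + S ^ 2
        + ((P ^ 2 + Q ^ 2) * YB + (R ^ 2 + S ^ 2) * YA) + (g ^ 2 + g' ^ 2)) := by
  have hYA : 0 ≤ YA := by nlinarith [sq_nonneg A]
  have hYB : 0 ≤ YB := by nlinarith [sq_nonneg B]
  have hPQ : (P + Q) ^ 2 ≤ 2 * (P ^ 2 + Q ^ 2) := add_sq_le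
  have hRS : (R + S) ^ 2 ≤ 2 * (R ^ 2 + S ^ 2) := add_sq_le
  have hPB : ((P + Q) * B) ^ 2 ≤ 8 * ((P ^ 2 + Q ^ 2) * YB) := by
    rw [mul_pow]
    nlinarith [mul_le_mul hPQ hB (sq_nonneg B) (by positivity)]
  have hRA : ((R + S) * A) ^ 2 ≤ 8 * ((R ^ 2 + S ^ 2) * YA) := by
    rw [mul_pow]
    nlinarith [mul_le_mul hRS hA (sq_nonneg A) (by positivity)]
  have hcross := two_mul_le_add_sq ((P + Q) * B) ((R + S) * A)
  have hPR := two_mul_le_add_sq (P + Q) (R + S)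
  have hPg := two_mul_le_add_sq (P + Q) g
  have hE : 0 ≤ (P ^ 2 + Q ^ 2) * YB + (R ^ 2 + S ^ 2) * YA := by positivity
  calc _ = K * ((P + Q) * (R + S) + ((P + Q) * B) ^ 2 + 2 * ((P + Q) * B) * ((R + S) * A))
        + (P + Q) * g := by ring
    _ ≤ K * (16 * (P ^ 2 + R ^ 2 + Q ^ 2 + S ^ 2
        + ((P ^ 2 + Q ^ 2) * YB + (R ^ 2 + S ^ 2) * YA))) + (P ^ 2 + Q ^ 2 + g ^ 2) := by
      gcongr <;> nlinarith
    _ ≤ _ := by nlinarith [mul_nonneg hK (add_nonneg (sq_nonneg g) (sq_nonneg g'))]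

theorem QLBStep.abs_sq_norm_sub_div_le {h m α β : ℝ} (hh : 0 < h)
    {g1 g2 a b a' b' ta tb ta' tb' : ℂ} (hs : QLBStep h m α β a b a' b')
    (ht : QLBStepInhom h m α β g1 g2 ta tb ta' tb') :
    |‖ta' - a'‖ ^ 2 - ‖ta - a‖ ^ 2| / h ≤ (16 * (|m| + |α| + |β|) + 1) *
      (‖ta' - a'‖ ^ 2 + ‖tb' - b'‖ ^ 2 + ‖ta - a‖ ^ 2 + ‖tb - b‖ ^ 2
        + ((‖ta' - a'‖ ^ 2 + ‖ta - a‖ ^ 2) * (‖b'‖ ^ 2 + ‖b‖ ^ 2 + ‖tb'‖ ^ 2 + ‖tb‖ ^ 2)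
          + (‖tb' - b'‖ ^ 2 + ‖tb - b‖ ^ 2) * (‖a'‖ ^ 2 + ‖a‖ ^ 2 + ‖ta'‖ ^ 2 + ‖ta‖ ^ 2))
        + (‖g1‖ ^ 2 + ‖g2‖ ^ 2)) := by
  have hdiff : (ta' - a') - (ta - a)
      = h * (qlbRhs m α β ta tb ta' tb' - qlbRhs m α β a b a' b' + g1) := by
    rw [sub_sub_sub_comm, ht.sub_eq hh.ne', hs.sub_eq]; ring
  set D := (|m| + |α| + |β|) * (‖tb' - b'‖ + ‖tb - b‖
      + (‖ta' - a'‖ + ‖ta - a‖) * (‖b'‖ + ‖b‖ + ‖tb'‖ + ‖tb‖) ^ 2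
      + 2 * (‖a'‖ + ‖a‖ + ‖ta'‖ + ‖ta‖) * (‖tb' - b'‖ + ‖tb - b‖)
        * (‖b'‖ + ‖b‖ + ‖tb'‖ + ‖tb‖)) + ‖g1‖
  have hstep : ‖(ta' - a') - (ta - a)‖ ≤ h * D := by
    rw [hdiff, norm_mul, Complex.norm_real, Real.norm_of_nonneg hh.le]
    exact mul_le_mul_of_nonneg_left ((norm_add_le _ _).trans
      (add_le_add_left (norm_qlbRhs_sub_qlbRhs_le ..) _)) hh.le
  rw [div_le_iff₀ hh]
  calc _ ≤ ‖(ta' - a') - (ta - a)‖ * (‖ta' - a'‖ + ‖ta - a‖) := abs_sq_norm_sub_sq_norm_le _ _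
    _ ≤ h * D * (‖ta' - a'‖ + ‖ta - a‖) := by gcongr
    _ = (‖ta' - a'‖ + ‖ta - a‖) * D * h := by ring
    _ ≤ _ := mul_le_mul_of_nonneg_right
      (young_absorb_le (by positivity) (sq_add_add_add_le ..) (sq_add_add_add_le ..)) hh.le
theorem stmt9_general (m α β : ℝ) :
    ∃ C₃ > (0 : ℝ), ∀ h : ℝ, 0 < h → h < 1 / 4 →
      ∀ u v : ℕ → ℤ → ℂ, IsQLB h m α β u v →
      ∀ ut vt g1 g2 : ℕ → ℤ → ℂ, IsQLBInhom h m α β g1 g2 ut vt →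
      ∀ (k : ℕ) (n : ℤ),
        let U : ℕ → ℤ → ℂ := fun k n => ut k n - u k n
        let V : ℕ → ℤ → ℂ := fun k n => vt k n - v k n
        let Ehat : ℝ :=
          (‖U (k + 1) (n + 1)‖ ^ 2 + ‖U k n‖ ^ 2) *
            (‖v (k + 1) (n - 1)‖ ^ 2 + ‖v k n‖ ^ 2
              + ‖vt (k + 1) (n - 1)‖ ^ 2 + ‖vt k n‖ ^ 2)
          + (‖V (k + 1) (n - 1)‖ ^ 2 + ‖V k n‖ ^ 2) *
            (‖u (k + 1) (n + 1)‖ ^ 2 + ‖u k n‖ ^ 2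
              + ‖ut (k + 1) (n + 1)‖ ^ 2 + ‖ut k n‖ ^ 2)
        let gsq : ℝ := ‖g1 k n‖ ^ 2 + ‖g2 k n‖ ^ 2
        |‖U (k + 1) (n + 1)‖ ^ 2 - ‖U k n‖ ^ 2| / h
          ≤ C₃ * (‖U (k + 1) (n + 1)‖ ^ 2 + ‖V (k + 1) (n - 1)‖ ^ 2
            + ‖U k n‖ ^ 2 + ‖V k n‖ ^ 2 + Ehat + gsq) ∧
        |‖V (k + 1) (n - 1)‖ ^ 2 - ‖V k n‖ ^ 2| / h
          ≤ C₃ * (‖U (k + 1) (n + 1)‖ ^ 2 + ‖V (k + 1) (n - 1)‖ ^ 2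
            + ‖U k n‖ ^ 2 + ‖V k n‖ ^ 2 + Ehat + gsq) := by
  refine ⟨16 * (|m| + |α| + |β|) + 1, by positivity, ?_⟩
  intro h hh _ u v hs ut vt g1 g2 ht k n
  exact ⟨(hs k n).abs_sq_norm_sub_div_le hh (ht k n),
    ((hs k n).swap.abs_sq_norm_sub_div_le hh (ht k n).swap).trans_eq (by ring)⟩

/-- Evolution estimates for the difference `U = ũ − u`, `V = ṽ − v` between a solution
of the QLB scheme and a solution of the inhomogeneous QLB scheme. -/
theorem stmt9 (m α β : ℝ) (hm : 0 ≤ m) :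
    ∃ C₃ > (0 : ℝ), ∀ h : ℝ, 0 < h → h < 1 / 4 →
      ∀ u v : ℕ → ℤ → ℂ, IsQLB h m α β u v →
      ∀ ut vt g1 g2 : ℕ → ℤ → ℂ, IsQLBInhom h m α β g1 g2 ut vt →
      ∀ (k : ℕ) (n : ℤ),
        let U : ℕ → ℤ → ℂ := fun k n => ut k n - u k n
        let V : ℕ → ℤ → ℂ := fun k n => vt k n - v k n
        let Ehat : ℝ :=
          (‖U (k + 1) (n + 1)‖ ^ 2 + ‖U k n‖ ^ 2) *
            (‖v (k + 1) (n - 1)‖ ^ 2 + ‖v k n‖ ^ 2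
              + ‖vt (k + 1) (n - 1)‖ ^ 2 + ‖vt k n‖ ^ 2)
          + (‖V (k + 1) (n - 1)‖ ^ 2 + ‖V k n‖ ^ 2) *
            (‖u (k + 1) (n + 1)‖ ^ 2 + ‖u k n‖ ^ 2
              + ‖ut (k + 1) (n + 1)‖ ^ 2 + ‖ut k n‖ ^ 2)
        let gsq : ℝ := ‖g1 k n‖ ^ 2 + ‖g2 k n‖ ^ 2
        |‖U (k + 1) (n + 1)‖ ^ 2 - ‖U k n‖ ^ 2| / h
          ≤ C₃ * (‖U (k + 1) (n + 1)‖ ^ 2 + ‖V (k + 1) (n - 1)‖ ^ 2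
            + ‖U k n‖ ^ 2 + ‖V k n‖ ^ 2 + Ehat + gsq) ∧
        |‖V (k + 1) (n - 1)‖ ^ 2 - ‖V k n‖ ^ 2| / h
          ≤ C₃ * (‖U (k + 1) (n + 1)‖ ^ 2 + ‖V (k + 1) (n - 1)‖ ^ 2
            + ‖U k n‖ ^ 2 + ‖V k n‖ ^ 2 + Ehat + gsq) :=
  stmt9_general m α β

end
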